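/- arXiv:2205.01266 — 2 statements merged into one kernel-verified Lean document; each statement's English description precedes it below -/
import Mathlib

section
/- Let p_1,…,p_k be positive integers with k ≥ 2 and n = p_1 + ⋯ + p_k. Then B_{p_1} × B_{p_2} × ⋯ × B_{p_k} (as a subset of B_n via iterated shifted products) is the disjoint union over all tuples (L_2,…,L_k) with L_i ⊆ [p_i] of the components B_{p_1} × B_{p_2,L_2} × ⋯ × B_{p_k,L_k}; moreover B_n is the disjoint union, over all ξ ∈ Sh(p_1,…,p_k) and all tuples (L_2,…,L_k) with L_i ⊆ [p_i], of the sets (B_{p_1} × B_{p_2,L_2} × ⋯ × B_{p_k,L_k})·ξ⁻¹. -/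
open Finset

open scoped Classical

/-- The hyperoctahedral group `𝔅ₙ`, realized as the set of those permutations `w` of `ℤ`
that satisfy `w (-i) = - w i` for all `i` and fix every integer of absolute value `> n`.
One-line notation: `w₁ ⋯ w_n` with `w_i = w i` for `1 ≤ i ≤ n`. -/
def SignedPerm (n : ℕ) : Set (Equiv.Perm ℤ) :=
  {w | (∀ i : ℤ, w (-i) = - w i) ∧ (∀ i : ℤ, (n : ℤ) < |i| → w i = i)}

/-- The inversion set `Inv(w) = {(i,j) : 1 ≤ i < j ≤ n, w_i > w_j}`. -/
noncomputable def InvSet (n : ℕ) (w : Equiv.Perm ℤ) : Finset (ℤ × ℤ) :=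
  ((Finset.Icc (1 : ℤ) (n : ℤ)) ×ˢ (Finset.Icc (1 : ℤ) (n : ℤ))).filter
    fun p => p.1 < p.2 ∧ w p.2 < w p.1

/-- The set of negative indices `Nega(w) = {i ∈ [n] : w_i < 0}`. -/
noncomputable def NegaSet (n : ℕ) (w : Equiv.Perm ℤ) : Finset ℤ :=
  (Finset.Icc (1 : ℤ) (n : ℤ)).filter fun i => w i < 0

/-- The negative sum pair set `Nsp(w) = {(i,j) : 1 ≤ i < j ≤ n, w_i + w_j < 0}`. -/
noncomputable def NspSet (n : ℕ) (w : Equiv.Perm ℤ) : Finset (ℤ × ℤ) :=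
  ((Finset.Icc (1 : ℤ) (n : ℤ)) ×ˢ (Finset.Icc (1 : ℤ) (n : ℤ))).filter
    fun p => p.1 < p.2 ∧ w p.1 + w p.2 < 0

/-- The Coxeter length of `w ∈ 𝔅ₙ`: `ℓ(w) = #Inv(w) + #Nega(w) + #Nsp(w)`. -/
noncomputable def blen (n : ℕ) (w : Equiv.Perm ℤ) : ℕ :=
  (InvSet n w).card + (NegaSet n w).card + (NspSet n w).card

/-- The left weak order on `𝔅ₙ`: `u ≤ v` iff `ℓ(v) = ℓ(u) + ℓ(v * u⁻¹)`. -/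
def wle (n : ℕ) (u v : Equiv.Perm ℤ) : Prop :=
  blen n v = blen n u + blen n (v * u⁻¹)

/-- The Coxeter generators of `𝔅ₙ`: `s₀ = (1,-1)` and `sᵢ = (i,i+1)(-i,-(i+1))` for `i ≥ 1`. -/
def sB (i : ℕ) : Equiv.Perm ℤ :=
  if i = 0 then Equiv.swap 1 (-1)
  else Equiv.swap (i : ℤ) ((i : ℤ) + 1) * Equiv.swap (-(i : ℤ)) (-((i : ℤ) + 1))

/-- `a[p] = a + p` if `a > 0`, `a - p` if `a < 0` (and `0 ↦ 0`). -/
def shiftFun (p : ℕ) (b : ℤ) : ℤ :=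
  if 0 < b then b + (p : ℤ) else if b < 0 then b - (p : ℤ) else 0

/-- `w` is the shifted product `u × v ∈ 𝔅_{p+q}` of `u ∈ 𝔅_p` and `v ∈ 𝔅_q`:
its one-line notation is `(u₁, …, u_p, v₁[p], …, v_q[p])`. -/
def IsSProd (p q : ℕ) (u v w : Equiv.Perm ℤ) : Prop :=
  w ∈ SignedPerm (p + q) ∧
  (∀ a : ℤ, 1 ≤ a → a ≤ (p : ℤ) → w a = u a) ∧
  (∀ a : ℤ, (p : ℤ) < a → a ≤ (p : ℤ) + (q : ℤ) → w a = shiftFun p (v (a - (p : ℤ))))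

/-- `ξ` is a `(p,q)`-shuffle: an element of `𝔅_{p+q}` with positive entries (a permutation)
that is increasing on each of the blocks `[1,p]` and `[p+1,p+q]`. -/
def IsShuffle (p q : ℕ) (ξ : Equiv.Perm ℤ) : Prop :=
  ξ ∈ SignedPerm (p + q) ∧
  (∀ a : ℤ, 1 ≤ a → a ≤ (p : ℤ) + (q : ℤ) → 0 < ξ a) ∧
  (∀ a b : ℤ, 1 ≤ a → a < b → b ≤ (p : ℤ) → ξ a < ξ b) ∧
  (∀ a b : ℤ, (p : ℤ) < a → a < b → b ≤ (p : ℤ) + (q : ℤ) → ξ a < ξ b)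

/-- `w` is the standard signed permutation `sts(a₁ ⋯ a_m)` of the word `a₁ ⋯ a_m = a 1, …, a m`
(of nonzero integers): the unique `w ∈ 𝔅_m` with the same negative index set and
`|w_i| < |w_j| ↔ |a_i| ≤ |a_j|` for `1 ≤ i < j ≤ m`. -/
def IsSts (m : ℕ) (a : ℤ → ℤ) (w : Equiv.Perm ℤ) : Prop :=
  w ∈ SignedPerm m ∧
  (∀ i : ℤ, 1 ≤ i → i ≤ (m : ℤ) → (w i < 0 ↔ a i < 0)) ∧
  (∀ i j : ℤ, 1 ≤ i → i < j → j ≤ (m : ℤ) → (|w i| < |w j| ↔ |a i| ≤ |a j|))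

/-- The standard signed permutation of a word, as a function. -/
noncomputable def sts (m : ℕ) (a : ℤ → ℤ) : Equiv.Perm ℤ :=
  if h : ∃ w, IsSts m a w then h.choose else 1

/-- Descent set of `w ∈ 𝔅ₙ`: `Des(w) = {i ∈ [0,n-1] : w_i > w_{i+1}}` with `w₀ = 0`
(note `w 0 = 0` holds automatically). -/
def DesSet (n : ℕ) (w : Equiv.Perm ℤ) : Finset ℕ :=
  (Finset.range n).filter fun i => w ((i : ℤ) + 1) < w (i : ℤ)

/-- Global descent set of `u ∈ 𝔅ₙ`. -/
noncomputable def GDesSet (n : ℕ) (u : Equiv.Perm ℤ) : Finset ℕ :=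
  (Finset.Ico 1 n).filter fun i =>
    ∀ j k : ℤ, 1 ≤ j → j ≤ (i : ℤ) → (i : ℤ) < k → k ≤ (n : ℤ) → u k < u j

/-- `m` is the meet (greatest lower bound) of `x` and `y` within `S`, w.r.t. the weak order. -/
def IsMeetIn (n : ℕ) (S : Set (Equiv.Perm ℤ)) (x y m : Equiv.Perm ℤ) : Prop :=
  m ∈ S ∧ wle n m x ∧ wle n m y ∧ ∀ z ∈ S, wle n z x → wle n z y → wle n z m

/-- `j` is the join (least upper bound) of `x` and `y` within `S`, w.r.t. the weak order. -/
def IsJoinIn (n : ℕ) (S : Set (Equiv.Perm ℤ)) (x y j : Equiv.Perm ℤ) : Prop :=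
  j ∈ S ∧ wle n x j ∧ wle n y j ∧ ∀ z ∈ S, wle n x z → wle n y z → wle n j z

/-- The set `𝔅_p × 𝔅_{q,K} ⊆ 𝔅_{p+q}` of shifted products `u × v` with `u ∈ 𝔅_p`,
`v ∈ 𝔅_q`, `Nega(v) = K`. -/
def SProdComp (p q : ℕ) (K : Finset ℤ) : Set (Equiv.Perm ℤ) :=
  {w | ∃ u v : Equiv.Perm ℤ, u ∈ SignedPerm p ∧ v ∈ SignedPerm q ∧ NegaSet q v = K ∧
        IsSProd p q u v w}

/-- `w` is the iterated shifted product `u⁽¹⁾ × ⋯ × u⁽ᵏ⁾` of the list `us` of signed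
permutations with block sizes given by the list `ps`. -/
def IsMultiSProd (ps : List ℕ) (us : List (Equiv.Perm ℤ)) (w : Equiv.Perm ℤ) : Prop :=
  w ∈ SignedPerm ps.sum ∧ us.length = ps.length ∧
  ∀ i < ps.length,
    us.getD i 1 ∈ SignedPerm (ps.getD i 0) ∧
    ∀ a : ℤ, ((ps.take i).sum : ℤ) < a → a ≤ ((ps.take i).sum : ℤ) + (ps.getD i 0 : ℤ) →
      w a = shiftFun ((ps.take i).sum) ((us.getD i 1) (a - ((ps.take i).sum : ℤ)))

/-- The subset `𝔅_{p₁} × 𝔅_{p₂} × ⋯ × 𝔅_{p_k}` of `𝔅_{p₁+⋯+p_k}`. -/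
def MultiProdSet (ps : List ℕ) : Set (Equiv.Perm ℤ) :=
  {w | ∃ us, IsMultiSProd ps us w}

/-- The `(L₂,…,L_k)`-component `𝔅_{p₁} × 𝔅_{p₂,L₂} × ⋯ × 𝔅_{p_k,L_k}`, where
`Ls.getD (i-1) ∅` is the prescribed negative index set of the `(i+1)`-st factor. -/
def ComponentSet (ps : List ℕ) (Ls : List (Finset ℤ)) : Set (Equiv.Perm ℤ) :=
  {w | ∃ us, IsMultiSProd ps us w ∧
        ∀ i, 1 ≤ i → i < ps.length →
          NegaSet (ps.getD i 0) (us.getD i 1) = Ls.getD (i - 1) ∅}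

/-- `ξ ∈ Sh(p₁,…,p_k)`: a permutation in `𝔅_{p₁+⋯+p_k}` (all entries positive)
increasing on each consecutive block. -/
def IsMultiShuffle (ps : List ℕ) (ξ : Equiv.Perm ℤ) : Prop :=
  ξ ∈ SignedPerm ps.sum ∧
  (∀ a : ℤ, 1 ≤ a → a ≤ (ps.sum : ℤ) → 0 < ξ a) ∧
  ∀ i < ps.length, ∀ a b : ℤ,
    ((ps.take i).sum : ℤ) < a → a < b → b ≤ ((ps.take i).sum : ℤ) + (ps.getD i 0 : ℤ) →
      ξ a < ξ b

/-- A valid tuple `(L₂,…,L_k)` of prescribed negative index sets: `L_i ⊆ [p_i]`. -/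
def ValidLs (ps : List ℕ) (Ls : List (Finset ℤ)) : Prop :=
  Ls.length = ps.length - 1 ∧
  ∀ i < ps.length - 1, Ls.getD i ∅ ⊆ Finset.Icc (1 : ℤ) (ps.getD (i + 1) 0 : ℤ)

/-! A multi-product `u⁽¹⁾ × ⋯ × u⁽ᵏ⁾` maps each block of positions `(S_i, S_i + p_i]`
(`S_i` the sum of the preceding block sizes) into plus or minus itself, and its signs on
block `i` are those of `u⁽ⁱ⁾`; so `w` determines `Nega(u⁽ⁱ⁾)`, which gives the first
decomposition. Conversely every signed permutation preserving the blocks in this sense is a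
multi-product. Given `w ∈ 𝔅_n`, `w ξ` preserves the blocks for a shuffle `ξ` exactly when `ξ`
maps block `i` increasingly onto the `p_i` positions `j` with `|w j|` in block `i`; this pins
down `ξ` and gives the second decomposition. -/

lemma Equiv.Perm.exists_eqOn_of_injOn {α : Type*} {s : Set α} (hs : s.Finite) {f : α → α}
    (hmaps : Set.MapsTo f s s) (hinj : Set.InjOn f s) :
    ∃ σ : Equiv.Perm α, Set.EqOn σ f s ∧ ∀ a ∉ s, σ a = a := by
  let e : Equiv.Perm s := ((hs.injOn_iff_bijOn_of_mapsTo hmaps).mp hinj).equiv f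
  exact ⟨Equiv.Perm.ofSubtype e, fun a ha => Equiv.Perm.ofSubtype_apply_of_mem e ha,
    fun a ha => Equiv.Perm.ofSubtype_apply_of_not_mem e ha⟩

namespace SignedPerm

variable {n : ℕ} {w w' : Equiv.Perm ℤ}

lemma map_zero (hw : w ∈ SignedPerm n) : w 0 = 0 := by
  have := hw.1 0
  rw [neg_zero] at this
  omega

lemma apply_ne_zero (hw : w ∈ SignedPerm n) {a : ℤ} (ha : a ≠ 0) : w a ≠ 0 :=
  fun h => ha (w.injective (h.trans (map_zero hw).symm))

lemma abs_apply_abs (hw : w ∈ SignedPerm n) (a : ℤ) : |w (|a|)| = |w a| := by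
  rcases abs_choice a with h | h <;> rw [h]
  rw [hw.1, abs_neg]

lemma abs_eq_abs_of_abs_apply_eq (hw : w ∈ SignedPerm n) {a b : ℤ} (h : |w a| = |w b|) :
    |a| = |b| := by
  rcases abs_eq_abs.mp h with h | h
  · rw [w.injective h]
  · rw [← hw.1] at h
    rw [w.injective h, abs_neg]

lemma abs_apply_le (hw : w ∈ SignedPerm n) {a : ℤ} (ha : |a| ≤ n) : |w a| ≤ n := by
  by_contra hlt
  have hfix : w (w a) = w a := hw.2 _ (not_le.mp hlt)
  rw [w.injective hfix] at hlt
  exact hlt ha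

lemma mul_mem (hw : w ∈ SignedPerm n) (hw' : w' ∈ SignedPerm n) : w * w' ∈ SignedPerm n :=
  ⟨fun i => by simp [hw.1, hw'.1], fun i hi => by simp [hw.2 i hi, hw'.2 i hi]⟩

lemma inv_mem (hw : w ∈ SignedPerm n) : w⁻¹ ∈ SignedPerm n := by
  refine ⟨fun i => w.injective ?_, fun i hi => w.injective ?_⟩
  · simp [hw.1]
  · simp [hw.2 i hi]

lemma ext_of_eqOn (hw : w ∈ SignedPerm n) (hw' : w' ∈ SignedPerm n)
    (h : ∀ a : ℤ, 1 ≤ a → a ≤ n → w a = w' a) : w = w' := by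
  have habs : ∀ a : ℤ, w |a| = w' |a| := by
    intro a
    rcases eq_or_ne a 0 with rfl | ha
    · simp [map_zero hw, map_zero hw']
    rcases le_or_gt |a| n with han | han
    · exact h _ (Int.one_le_abs ha) han
    · rw [hw.2 _ (by rwa [abs_abs]), hw'.2 _ (by rwa [abs_abs])]
  ext a
  rcases abs_choice a with ha | ha
  · rw [← ha, habs]
  · rw [← neg_neg a, ← ha, hw.1, hw'.1, habs]

lemma exists_eqOn_Icc (f : ℤ → ℤ) (hf : ∀ a : ℤ, 1 ≤ a → a ≤ n → 1 ≤ |f a| ∧ |f a| ≤ n)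
    (hinj : ∀ a b : ℤ, 1 ≤ a → a ≤ n → 1 ≤ b → b ≤ n → |f a| = |f b| → a = b) :
    ∃ w ∈ SignedPerm n, ∀ a : ℤ, 1 ≤ a → a ≤ n → w a = f a := by
  set s : Set ℤ := {a | 1 ≤ |a| ∧ |a| ≤ n}
  set F : ℤ → ℤ := fun a => a.sign * f (|a|)
  have hF_neg : ∀ a, F (-a) = -F a := fun a => by simp [F, Int.sign_neg]
  have hF_abs : ∀ a ∈ s, |F a| = |f (|a|)| := fun a ha => by
    simp [F, abs_mul, Int.abs_sign_of_ne_zero (abs_pos.mp (one_pos.trans_le ha.1))]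
  have hs : s.Finite := (Set.finite_Icc (-(n : ℤ)) n).subset fun a ha => abs_le.mp ha.2
  have hmaps : Set.MapsTo F s s := fun a ha => by
    show 1 ≤ |F a| ∧ |F a| ≤ n
    rw [hF_abs a ha]
    exact hf _ ha.1 ha.2
  have hinjF : Set.InjOn F s := by
    intro a ha b hb hab
    have habs : |a| = |b| := by
      refine hinj _ _ ha.1 ha.2 hb.1 hb.2 ?_
      rw [← hF_abs a ha, ← hF_abs b hb, hab]
    rcases abs_eq_abs.mp habs with h | h
    · exact h
    · have hFb : F b = 0 := by rw [h, hF_neg] at hab; omega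
      have := (hmaps hb).1
      rw [hFb] at this
      simp at this
  obtain ⟨σ, hσF, hσfix⟩ := Equiv.Perm.exists_eqOn_of_injOn hs hmaps hinjF
  have hs_neg : ∀ {a}, -a ∈ s ↔ a ∈ s := by simp [s]
  refine ⟨σ, ⟨fun a => ?_, fun a ha => hσfix a fun h => ?_⟩, fun a ha1 ha2 => ?_⟩
  · by_cases ha : a ∈ s
    · rw [hσF ha, hσF (hs_neg.mpr ha), hF_neg]
    · rw [hσfix a ha, hσfix (-a) (mt hs_neg.mp ha)]
  · exact absurd h.2 (not_le.mpr ha)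
  · rw [hσF ⟨by rwa [abs_of_pos (by omega)], by rwa [abs_of_pos (by omega)]⟩]
    simp [F, Int.sign_eq_one_of_pos (by omega : 0 < a), abs_of_pos (by omega : 0 < a)]

end SignedPerm

section Blocks

variable (ps : List ℕ)

def InBlock (i : ℕ) (a : ℤ) : Prop :=
  ((ps.take i).sum : ℤ) < a ∧ a ≤ ((ps.take i).sum : ℤ) + (ps.getD i 0 : ℤ)

def blockPos (i : ℕ) (j : Fin (ps.getD i 0)) : ℤ := ((ps.take i).sum : ℤ) + 1 + j

variable {ps} {i j : ℕ} {a : ℤ}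

lemma sum_take_add_getD (i : ℕ) : (ps.take i).sum + ps.getD i 0 = (ps.take (i + 1)).sum := by
  rcases lt_or_ge i ps.length with h | h
  · rw [List.sum_take_succ _ _ h, List.getD_eq_getElem _ _ h]
  · rw [List.getD_eq_default _ _ h, List.take_of_length_le h,
      List.take_of_length_le (h.trans i.le_succ), add_zero]

lemma sum_take_le_sum (i : ℕ) : (ps.take i).sum ≤ ps.sum :=
  (List.take_sublist i ps).sum_le_sum fun _ _ => Nat.zero_le _

lemma InBlock.one_le (h : InBlock ps i a) : 1 ≤ a := by
  have := h.1
  omega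

lemma InBlock.le_sum (h : InBlock ps i a) : a ≤ ps.sum := by
  have := h.2
  have := sum_take_add_getD (ps := ps) i
  have := sum_take_le_sum (ps := ps) (i + 1)
  omega

lemma InBlock.lt_length (h : InBlock ps i a) : i < ps.length := by
  by_contra hi
  have := h.2
  rw [List.getD_eq_default _ _ (not_lt.mp hi)] at this
  have := h.1
  omega

lemma InBlock.unique (hi : InBlock ps i a) (hj : InBlock ps j a) : i = j := by
  have hlt : ∀ {i j}, InBlock ps i a → InBlock ps j a → ¬ i < j := fun {i _} hi hj hij => by
    have := sum_take_add_getD (ps := ps) i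
    have : (ps.take (i + 1)).sum ≤ (ps.take _).sum := List.monotone_sum_take ps hij
    have := hi.2
    have := hj.1
    omega
  exact le_antisymm (not_lt.mp (hlt hj hi)) (not_lt.mp (hlt hi hj))

lemma exists_inBlock (h1 : 1 ≤ a) (h2 : a ≤ ps.sum) : ∃ i, InBlock ps i a := by
  have hex : ∃ i, a ≤ ((ps.take (i + 1)).sum : ℤ) :=
    ⟨ps.length, by rwa [List.take_of_length_le (Nat.le_succ _)]⟩
  refine ⟨Nat.find hex, ?_, ?_⟩
  · cases hm : Nat.find hex with
    | zero => simpa using Int.lt_iff_add_one_le.mpr h1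
    | succ m => simpa using Nat.find_min hex (hm ▸ m.lt_succ_self)
  · have := Nat.find_spec hex
    rw [← sum_take_add_getD] at this
    exact_mod_cast this

lemma inBlock_blockPos (j : Fin (ps.getD i 0)) : InBlock ps i (blockPos ps i j) := by
  have := j.isLt
  constructor <;> simp only [blockPos] <;> omega

lemma strictMono_blockPos (i : ℕ) : StrictMono (blockPos ps i) := fun j j' h => by
  have : (j : ℕ) < j' := h
  simp only [blockPos]
  omega

lemma InBlock.exists_blockPos_eq (h : InBlock ps i a) : ∃ j, blockPos ps i j = a :=
  ⟨⟨(a - (ps.take i).sum - 1).toNat, by have := h.1; have := h.2; omega⟩, by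
    have := h.1
    simp only [blockPos]
    omega⟩

lemma exists_blockPos_eq (h1 : 1 ≤ a) (h2 : a ≤ ps.sum) : ∃ i j, blockPos ps i j = a :=
  let ⟨i, hi⟩ := exists_inBlock h1 h2
  ⟨i, hi.exists_blockPos_eq⟩

lemma exists_apply_blockPos_eq (g : ∀ i, Fin (ps.getD i 0) → ℤ) :
    ∃ f : ℤ → ℤ, ∀ i j, f (blockPos ps i j) = g i j := by
  have hglue : ∀ a : ℤ, ∃ y, ∀ i j, blockPos ps i j = a → y = g i j := by
    intro a
    by_cases ha : ∃ i j, blockPos ps i j = a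
    · obtain ⟨i, j, rfl⟩ := ha
      refine ⟨g i j, fun i' j' h => ?_⟩
      obtain rfl := (inBlock_blockPos j).unique (h ▸ inBlock_blockPos j')
      rw [(strictMono_blockPos i).injective h]
    · exact ⟨0, fun i j h => (ha ⟨i, j, h⟩).elim⟩
  choose f hf using hglue
  exact ⟨f, fun i j => hf _ i j rfl⟩

end Blocks

section ShiftFun

variable (p : ℕ) {b : ℤ}

lemma shiftFun_neg_iff : shiftFun p b < 0 ↔ b < 0 := by
  unfold shiftFun
  split_ifs <;> omega

lemma abs_shiftFun (hb : b ≠ 0) : |shiftFun p b| = |b| + p := by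
  unfold shiftFun
  rcases lt_or_gt_of_ne hb with h | h
  · rw [if_neg h.not_gt, if_pos h, abs_of_neg h, abs_of_neg (by omega)]
    omega
  · rw [if_pos h, abs_of_pos h, abs_of_pos (by omega)]

lemma shiftFun_sub_sign_mul (hb : (p : ℤ) < |b|) : shiftFun p (b - b.sign * p) = b := by
  unfold shiftFun
  rcases lt_or_gt_of_ne (abs_pos.mp ((Int.natCast_nonneg p).trans_lt hb)) with h | h
  · rw [Int.sign_eq_neg_one_of_neg h, abs_of_neg h] at *
    split_ifs <;> omega
  · rw [Int.sign_eq_one_of_pos h, abs_of_pos h] at *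
    split_ifs <;> omega

lemma abs_sub_sign_mul (hb : (p : ℤ) < |b|) : |b - b.sign * p| = |b| - p := by
  rcases lt_or_gt_of_ne (abs_pos.mp ((Int.natCast_nonneg p).trans_lt hb)) with h | h
  · rw [Int.sign_eq_neg_one_of_neg h, abs_of_neg h] at *
    rw [abs_of_neg (by omega)]
    omega
  · rw [Int.sign_eq_one_of_pos h, abs_of_pos h] at *
    rw [abs_of_pos (by omega)]
    omega

end ShiftFun

def PreservesBlocks (ps : List ℕ) (v : Equiv.Perm ℤ) : Prop :=
  ∀ i a, InBlock ps i a → InBlock ps i |v a|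

namespace IsMultiSProd

variable {ps : List ℕ} {us : List (Equiv.Perm ℤ)} {w : Equiv.Perm ℤ} {i : ℕ}

lemma apply_add (h : IsMultiSProd ps us w) (hi : i < ps.length) {b : ℤ} (hb1 : 1 ≤ b)
    (hb2 : b ≤ ps.getD i 0) :
    w ((ps.take i).sum + b) = shiftFun (ps.take i).sum (us.getD i 1 b) := by
  rw [(h.2.2 i hi).2 _ (by omega) (by omega), add_sub_cancel_left]

lemma preservesBlocks (h : IsMultiSProd ps us w) : PreservesBlocks ps w := by
  intro i a ha
  have hu := (h.2.2 i ha.lt_length).1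
  have hb1 : 1 ≤ a - (ps.take i).sum := by have := ha.1; omega
  have hb2 : a - (ps.take i).sum ≤ ps.getD i 0 := by have := ha.2; omega
  have hub := SignedPerm.abs_apply_le hu (a := a - (ps.take i).sum) (by rwa [abs_of_pos (by omega)])
  have hne := SignedPerm.apply_ne_zero hu (a := a - (ps.take i).sum) (by omega)
  have := h.apply_add ha.lt_length hb1 hb2
  rw [add_sub_cancel] at this
  rw [this, abs_shiftFun _ hne]
  have := Int.one_le_abs hne
  constructor <;> omega

lemma negaSet_eq (h : IsMultiSProd ps us w) (hi : i < ps.length) :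
    NegaSet (ps.getD i 0) (us.getD i 1) =
      (Finset.Icc 1 (ps.getD i 0 : ℤ)).filter fun b => w ((ps.take i).sum + b) < 0 := by
  ext b
  simp only [NegaSet, Finset.mem_filter, Finset.mem_Icc, and_congr_right_iff, and_imp]
  intro hb1 hb2
  rw [h.apply_add hi hb1 hb2, shiftFun_neg_iff]

end IsMultiSProd

lemma mem_multiProdSet_of_preservesBlocks {ps : List ℕ} {v : Equiv.Perm ℤ}
    (hv : v ∈ SignedPerm ps.sum) (hpres : PreservesBlocks ps v) : v ∈ MultiProdSet ps := by
  have hfactor : ∀ i, ∃ u ∈ SignedPerm (ps.getD i 0), ∀ b : ℤ, 1 ≤ b → b ≤ ps.getD i 0 →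
      v ((ps.take i).sum + b) = shiftFun (ps.take i).sum (u b) := by
    intro i
    set S : ℤ := ((ps.take i).sum : ℤ)
    have hblock : ∀ b : ℤ, 1 ≤ b → b ≤ ps.getD i 0 → InBlock ps i |v (S + b)| :=
      fun b hb1 hb2 => hpres i _ ⟨by omega, by omega⟩
    obtain ⟨u, hu, hug⟩ := SignedPerm.exists_eqOn_Icc (n := ps.getD i 0)
      (fun b => v (S + b) - (v (S + b)).sign * S)
      (fun b hb1 hb2 => by
        obtain ⟨hlo, hhi⟩ := hblock b hb1 hb2
        rw [abs_sub_sign_mul _ hlo]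
        constructor <;> omega)
      (fun b b' hb1 hb2 hb1' hb2' hbb' => by
        rw [abs_sub_sign_mul _ (hblock b hb1 hb2).1, abs_sub_sign_mul _ (hblock b' hb1' hb2').1,
          sub_left_inj] at hbb'
        have := SignedPerm.abs_eq_abs_of_abs_apply_eq hv hbb'
        rw [abs_of_pos (by omega), abs_of_pos (by omega)] at this
        omega)
    exact ⟨u, hu, fun b hb1 hb2 => by
      rw [hug b hb1 hb2, shiftFun_sub_sign_mul _ (hblock b hb1 hb2).1]⟩
  choose u hu hvu using hfactor
  refine ⟨(List.range ps.length).map u, hv, by simp, fun i hi => ?_⟩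
  have hget : ((List.range ps.length).map u).getD i 1 = u i := by simp [hi]
  rw [hget]
  refine ⟨hu i, fun a ha1 ha2 => ?_⟩
  rw [← hvu i _ (by omega) (by omega), add_sub_cancel]

section Components

variable {ps : List ℕ} {us : List (Equiv.Perm ℤ)} {w : Equiv.Perm ℤ}

noncomputable def negaSets (ps : List ℕ) (us : List (Equiv.Perm ℤ)) : List (Finset ℤ) :=
  (List.range (ps.length - 1)).map fun j => NegaSet (ps.getD (j + 1) 0) (us.getD (j + 1) 1)

lemma validLs_negaSets (ps : List ℕ) (us : List (Equiv.Perm ℤ)) : ValidLs ps (negaSets ps us) :=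
  ⟨by simp [negaSets], fun i hi => by simp [negaSets, hi, NegaSet]⟩

lemma IsMultiSProd.mem_componentSet (h : IsMultiSProd ps us w) :
    w ∈ ComponentSet ps (negaSets ps us) := by
  refine ⟨us, h, fun i hi1 hi => ?_⟩
  obtain ⟨j, rfl⟩ := Nat.exists_eq_add_of_le' hi1
  simp [negaSets, show j < ps.length - 1 by omega]

lemma eq_of_mem_componentSet {Ls Ls' : List (Finset ℤ)} (hLs : ValidLs ps Ls)
    (hLs' : ValidLs ps Ls') (hw : w ∈ ComponentSet ps Ls) (hw' : w ∈ ComponentSet ps Ls') :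
    Ls = Ls' := by
  obtain ⟨us, hus, hNega⟩ := hw
  obtain ⟨us', hus', hNega'⟩ := hw'
  refine List.ext_getElem (hLs.1.trans hLs'.1.symm) fun j hj hj' => ?_
  have hj1 : j + 1 < ps.length := by have := hLs.1; omega
  rw [← List.getD_eq_getElem _ ∅ hj, ← List.getD_eq_getElem _ ∅ hj',
    ← Nat.add_sub_cancel j 1, ← hNega (j + 1) (by omega) hj1, ← hNega' (j + 1) (by omega) hj1,
    hus.negaSet_eq hj1, hus'.negaSet_eq hj1]

lemma componentSet_subset_multiProdSet (Ls : List (Finset ℤ)) :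
    ComponentSet ps Ls ⊆ MultiProdSet ps :=
  fun _ ⟨us, hus, _⟩ => ⟨us, hus⟩

theorem multiProdSet_eq_iUnion_componentSet (ps : List ℕ) :
    MultiProdSet ps = ⋃ (Ls : List (Finset ℤ)) (_ : ValidLs ps Ls), ComponentSet ps Ls := by
  ext w
  simp only [Set.mem_iUnion]
  constructor
  · rintro ⟨us, hus⟩
    exact ⟨_, validLs_negaSets ps us, hus.mem_componentSet⟩
  · rintro ⟨Ls, -, hw⟩
    exact componentSet_subset_multiProdSet Ls hw

theorem disjoint_componentSet {Ls Ls' : List (Finset ℤ)} (hLs : ValidLs ps Ls)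
    (hLs' : ValidLs ps Ls') (hne : Ls ≠ Ls') :
    Disjoint (ComponentSet ps Ls) (ComponentSet ps Ls') :=
  Set.disjoint_left.mpr fun _ hw hw' => hne (eq_of_mem_componentSet hLs hLs' hw hw')

end Components

section Shuffles

variable {ps : List ℕ} {x ξ ξ' : Equiv.Perm ℤ}

noncomputable def blockPreimage (ps : List ℕ) (x : Equiv.Perm ℤ) (i : ℕ) : Finset ℤ :=
  (Finset.Icc 1 (ps.sum : ℤ)).filter fun j => InBlock ps i |x j|

lemma mem_blockPreimage {i : ℕ} {j : ℤ} :
    j ∈ blockPreimage ps x i ↔ (1 ≤ j ∧ j ≤ ps.sum) ∧ InBlock ps i |x j| := by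
  simp [blockPreimage]

lemma card_blockPreimage (hx : x ∈ SignedPerm ps.sum) (i : ℕ) :
    (blockPreimage ps x i).card = ps.getD i 0 := by
  set S : ℤ := ((ps.take i).sum : ℤ)
  have hcard : (Finset.Ioc S (S + ps.getD i 0)).card = ps.getD i 0 := by simp
  rw [← hcard]
  refine Finset.card_nbij (fun j => |x j|) (fun j hj => ?_) (fun j hj j' hj' hjj' => ?_)
    (fun m hm => ?_)
  · exact Finset.mem_Ioc.mpr (mem_blockPreimage.mp hj).2
  · have hj := (mem_blockPreimage.mp hj).1
    have hj' := (mem_blockPreimage.mp hj').1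
    have := SignedPerm.abs_eq_abs_of_abs_apply_eq hx hjj'
    rwa [abs_of_pos (by omega), abs_of_pos (by omega)] at this
  · have hm : InBlock ps i m := Finset.mem_Ioc.mp hm
    have hne : x⁻¹ m ≠ 0 := SignedPerm.apply_ne_zero (SignedPerm.inv_mem hx) (by
      have := hm.one_le; omega)
    have hle : |x⁻¹ m| ≤ ps.sum := SignedPerm.abs_apply_le (SignedPerm.inv_mem hx) (by
      rw [abs_of_pos (by have := hm.one_le; omega)]; exact hm.le_sum)
    have hxm : |x (|x⁻¹ m|)| = m := by
      rw [SignedPerm.abs_apply_abs hx, Equiv.Perm.coe_inv, Equiv.apply_symm_apply, abs_of_pos (by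
        have := hm.one_le; omega)]
    refine ⟨|x⁻¹ m|, mem_blockPreimage.mpr ⟨⟨Int.one_le_abs hne, hle⟩, ?_⟩, hxm⟩
    rwa [hxm]

lemma IsMultiShuffle.strictMono_comp_blockPos (hξ : IsMultiShuffle ps ξ) (i : ℕ) :
    StrictMono fun j => ξ (blockPos ps i j) := fun j j' hjj' =>
  hξ.2.2 i (inBlock_blockPos j).lt_length _ _ (inBlock_blockPos j).1
    (strictMono_blockPos i hjj') (inBlock_blockPos j').2

lemma IsMultiShuffle.apply_blockPos_eq (hx : x ∈ SignedPerm ps.sum) (hξ : IsMultiShuffle ps ξ)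
    (hpres : PreservesBlocks ps (x * ξ)) (i : ℕ) :
    (fun j => ξ (blockPos ps i j)) =
      (blockPreimage ps x i).orderEmbOfFin (card_blockPreimage hx i) := by
  refine Finset.orderEmbOfFin_unique _ (fun j => ?_) (hξ.strictMono_comp_blockPos i)
  have ha := inBlock_blockPos (ps := ps) j
  have hpos := hξ.2.1 _ ha.one_le ha.le_sum
  have hle := SignedPerm.abs_apply_le hξ.1 (a := blockPos ps i j)
    (by rw [abs_of_pos (by have := ha.one_le; omega)]; exact ha.le_sum)
  rw [abs_of_pos hpos] at hle
  exact mem_blockPreimage.mpr ⟨⟨hpos, hle⟩, hpres i _ ha⟩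

lemma IsMultiShuffle.eq_of_preservesBlocks (hx : x ∈ SignedPerm ps.sum)
    (hξ : IsMultiShuffle ps ξ) (hξ' : IsMultiShuffle ps ξ') (hpres : PreservesBlocks ps (x * ξ))
    (hpres' : PreservesBlocks ps (x * ξ')) : ξ = ξ' :=
  SignedPerm.ext_of_eqOn hξ.1 hξ'.1 fun a ha1 ha2 => by
    obtain ⟨i, j, rfl⟩ := exists_blockPos_eq ha1 ha2
    exact congrFun ((hξ.apply_blockPos_eq hx hpres i).trans
      (hξ'.apply_blockPos_eq hx hpres' i).symm) j

lemma exists_isMultiShuffle_preservesBlocks (hx : x ∈ SignedPerm ps.sum) :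
    ∃ ξ, IsMultiShuffle ps ξ ∧ PreservesBlocks ps (x * ξ) := by
  set e := fun i => (blockPreimage ps x i).orderEmbOfFin (card_blockPreimage hx i)
  have he : ∀ i j, (1 ≤ e i j ∧ e i j ≤ ps.sum) ∧ InBlock ps i |x (e i j)| := fun i j =>
    mem_blockPreimage.mp (Finset.orderEmbOfFin_mem _ _ _)
  obtain ⟨f, hfe⟩ := exists_apply_blockPos_eq (ps := ps) fun i j => e i j
  obtain ⟨ξ, hξ, hξf⟩ := SignedPerm.exists_eqOn_Icc f (fun a ha1 ha2 => by
      obtain ⟨i, j, rfl⟩ := exists_blockPos_eq ha1 ha2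
      rw [hfe, abs_of_pos (by have := he i j; omega)]
      exact (he i j).1)
    (fun a b ha1 ha2 hb1 hb2 hab => by
      obtain ⟨i, j, rfl⟩ := exists_blockPos_eq ha1 ha2
      obtain ⟨i', j', rfl⟩ := exists_blockPos_eq hb1 hb2
      rw [hfe, hfe, abs_of_pos (by have := he i j; omega),
        abs_of_pos (by have := he i' j'; omega)] at hab
      obtain rfl := (he i j).2.unique (hab ▸ (he i' j').2)
      rw [(e i).injective hab])
  have hξe : ∀ i j, ξ (blockPos ps i j) = e i j := fun i j => by
    rw [hξf _ (inBlock_blockPos j).one_le (inBlock_blockPos j).le_sum, hfe]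
  refine ⟨ξ, ⟨hξ, fun a ha1 ha2 => ?_, fun i _ a b ha hab hb => ?_⟩, fun i a ha => ?_⟩
  · obtain ⟨i, j, rfl⟩ := exists_blockPos_eq ha1 ha2
    rw [hξe]
    have := he i j
    omega
  · obtain ⟨j, rfl⟩ := (show InBlock ps i a from ⟨ha, by omega⟩).exists_blockPos_eq
    obtain ⟨j', rfl⟩ := (show InBlock ps i b from ⟨by omega, hb⟩).exists_blockPos_eq
    rw [hξe, hξe]
    exact (e i).strictMono ((strictMono_blockPos i).lt_iff_lt.mp hab)
  · obtain ⟨j, rfl⟩ := ha.exists_blockPos_eq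
    rw [Equiv.Perm.mul_apply, hξe]
    exact (he i j).2

end Shuffles

theorem signedPerm_eq_iUnion_translates (ps : List ℕ) :
    SignedPerm ps.sum =
      ⋃ (ξ : Equiv.Perm ℤ) (_ : IsMultiShuffle ps ξ) (Ls : List (Finset ℤ)) (_ : ValidLs ps Ls),
        (fun w => w * ξ⁻¹) '' ComponentSet ps Ls := by
  ext w
  simp only [Set.mem_iUnion, Set.mem_image]
  constructor
  · intro hw
    obtain ⟨ξ, hξ, hpres⟩ := exists_isMultiShuffle_preservesBlocks hw
    obtain ⟨us, hus⟩ := mem_multiProdSet_of_preservesBlocks (SignedPerm.mul_mem hw hξ.1) hpres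
    exact ⟨ξ, hξ, _, validLs_negaSets ps us, w * ξ, hus.mem_componentSet,
      mul_inv_cancel_right w ξ⟩
  · rintro ⟨ξ, hξ, Ls, -, v, hv, rfl⟩
    obtain ⟨us, hus⟩ := componentSet_subset_multiProdSet _ hv
    exact SignedPerm.mul_mem hus.1 (SignedPerm.inv_mem hξ.1)

theorem disjoint_translates {ps : List ℕ} {ξ ξ' : Equiv.Perm ℤ} {Ls Ls' : List (Finset ℤ)}
    (hξ : IsMultiShuffle ps ξ) (hξ' : IsMultiShuffle ps ξ') (hLs : ValidLs ps Ls)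
    (hLs' : ValidLs ps Ls') (hne : (ξ, Ls) ≠ (ξ', Ls')) :
    Disjoint ((fun w => w * ξ⁻¹) '' ComponentSet ps Ls)
      ((fun w => w * ξ'⁻¹) '' ComponentSet ps Ls') := by
  refine Set.disjoint_left.mpr ?_
  rintro _ ⟨v, hv, rfl⟩ ⟨v', hv', hvv' : v' * ξ'⁻¹ = v * ξ⁻¹⟩
  obtain ⟨us, hus⟩ := componentSet_subset_multiProdSet _ hv
  obtain ⟨us', hus'⟩ := componentSet_subset_multiProdSet _ hv'
  obtain rfl : ξ = ξ' := by
    refine hξ.eq_of_preservesBlocks (SignedPerm.mul_mem hus.1 (SignedPerm.inv_mem hξ.1)) hξ'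
      ?_ ?_
    · rw [inv_mul_cancel_right]
      exact hus.preservesBlocks
    · rw [← hvv', inv_mul_cancel_right]
      exact hus'.preservesBlocks
  obtain rfl : v' = v := mul_right_cancel hvv'
  exact hne (by rw [eq_of_mem_componentSet hLs hLs' hv hv'])

theorem multiprod_disjoint_union_general (ps : List ℕ) :
    (MultiProdSet ps =
      ⋃ (Ls : List (Finset ℤ)) (_ : ValidLs ps Ls), ComponentSet ps Ls) ∧
    (∀ Ls Ls' : List (Finset ℤ), ValidLs ps Ls → ValidLs ps Ls' → Ls ≠ Ls' →
      Disjoint (ComponentSet ps Ls) (ComponentSet ps Ls')) ∧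
    (SignedPerm ps.sum =
      ⋃ (ξ : Equiv.Perm ℤ) (_ : IsMultiShuffle ps ξ)
        (Ls : List (Finset ℤ)) (_ : ValidLs ps Ls),
          (fun w => w * ξ⁻¹) '' ComponentSet ps Ls) ∧
    (∀ ξ ξ' : Equiv.Perm ℤ, ∀ Ls Ls' : List (Finset ℤ),
      IsMultiShuffle ps ξ → IsMultiShuffle ps ξ' → ValidLs ps Ls → ValidLs ps Ls' →
      (ξ, Ls) ≠ (ξ', Ls') →
      Disjoint ((fun w => w * ξ⁻¹) '' ComponentSet ps Ls)
        ((fun w => w * ξ'⁻¹) '' ComponentSet ps Ls')) :=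
  ⟨multiProdSet_eq_iUnion_componentSet ps, fun _ _ => disjoint_componentSet,
    signedPerm_eq_iUnion_translates ps, fun _ _ _ _ => disjoint_translates⟩

/-- `𝔅_{p₁} × ⋯ × 𝔅_{p_k}` is the disjoint union of its components
`𝔅_{p₁} × 𝔅_{p₂,L₂} × ⋯ × 𝔅_{p_k,L_k}` over all tuples `(L₂,…,L_k)` with `L_i ⊆ [p_i]`;
moreover `𝔅_n` is the disjoint union of the translates of these components by the
inverses of the shuffles `ξ ∈ Sh(p₁,…,p_k)`. -/
theorem multiprod_disjoint_union (ps : List ℕ) (hk : 2 ≤ ps.length)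
    (hpos : ∀ x ∈ ps, 0 < x) :
    (MultiProdSet ps =
      ⋃ (Ls : List (Finset ℤ)) (_ : ValidLs ps Ls), ComponentSet ps Ls) ∧
    (∀ Ls Ls' : List (Finset ℤ), ValidLs ps Ls → ValidLs ps Ls' → Ls ≠ Ls' →
      Disjoint (ComponentSet ps Ls) (ComponentSet ps Ls')) ∧
    (SignedPerm ps.sum =
      ⋃ (ξ : Equiv.Perm ℤ) (_ : IsMultiShuffle ps ξ)
        (Ls : List (Finset ℤ)) (_ : ValidLs ps Ls),
          (fun w => w * ξ⁻¹) '' ComponentSet ps Ls) ∧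
    (∀ ξ ξ' : Equiv.Perm ℤ, ∀ Ls Ls' : List (Finset ℤ),
      IsMultiShuffle ps ξ → IsMultiShuffle ps ξ' → ValidLs ps Ls → ValidLs ps Ls' →
      (ξ, Ls) ≠ (ξ', Ls') →
      Disjoint ((fun w => w * ξ⁻¹) '' ComponentSet ps Ls)
        ((fun w => w * ξ'⁻¹) '' ComponentSet ps Ls')) :=
  multiprod_disjoint_union_general ps
end

section
/- Let P and Q be finite posets with a Galois connection (f,g) : P ⇄ Q where f is surjective. Let k be a field, let kP and kQ be the free k-vector spaces with bases {F_p : p ∈ P} and {F_q : q ∈ Q}, and define M_p = Σ_{p ≤ x} μ_P(p,x) F_x in kP and M_y = Σ_{y ≤ q} μ_Q(y,q) F_q in kQ, where μ_P and μ_Q are the Möbius functions of P and Q. Let π : kP → kQ be the linear map with π(F_p) = F_{f(p)}. Then π(M_p) = M_y if there exists y ∈ Q with p = g(y), and π(M_p) = 0 otherwise. -/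
open scoped Classical

private lemma mobius_interval_sum' {α : Type*} [PartialOrder α] [Fintype α] {k : Type*} [Field k]
    (μ : α → α → ℤ) (hμ1 : ∀ x, μ x x = 1)
    (hμ2 : ∀ x y : α, x < y →
      ∑ z ∈ Finset.univ.filter (fun z => x ≤ z ∧ z ≤ y), μ x z = 0)
    (a b : α) :
    ∑ z ∈ Finset.univ.filter (fun z => a ≤ z ∧ z ≤ b), (μ a z : k)
      = if b = a then 1 else 0 := by
  by_cases hab : a ≤ b
  · rcases eq_or_lt_of_le hab with rfl | hlt
    · rw [if_pos rfl]
      have h : Finset.univ.filter (fun z => a ≤ z ∧ z ≤ a) = {a} := by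
        ext z
        simp only [Finset.mem_filter, Finset.mem_univ, true_and, Finset.mem_singleton]
        constructor
        · rintro ⟨h1, h2⟩; exact le_antisymm h2 h1
        · rintro rfl; exact ⟨le_rfl, le_rfl⟩
      rw [h, Finset.sum_singleton, hμ1]; simp
    · rw [if_neg hlt.ne']
      rw [show (0 : k) = ((0 : ℤ) : k) by simp, ← hμ2 a b hlt, Int.cast_sum]
  · rw [if_neg (by rintro rfl; exact hab le_rfl)]
    rw [Finset.filter_false_of_mem, Finset.sum_empty]
    rintro z _ ⟨h1, h2⟩
    exact hab (h1.trans h2)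

/-- Let `(f,g) : P ⇄ Q` be a Galois connection between finite posets
with `f` surjective, `k` a field, and let `kP`, `kQ` be the free `k`-vector spaces on
`P`, `Q` (realized as `P → k`, `Q → k` with the basis `F_p = indicator of p`).  With
`M_p = ∑_{p ≤ x} μ_P(p,x) F_x` and `M_y = ∑_{y ≤ q} μ_Q(y,q) F_q` and
`π : kP → kQ` induced by `F_p ↦ F_{f p}`, one has `π(M_p) = M_y` when `p = g y`, and
`π(M_p) = 0` when `p` is not in the image of `g`. -/
theorem monomial_image_under_galois {P Q : Type*} [PartialOrder P] [PartialOrder Q]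
    [Fintype P] [Fintype Q] {k : Type*} [Field k]
    (f : P → Q) (g : Q → P) (hf : Monotone f) (hg : Monotone g)
    (hsurj : Function.Surjective f) (hGal : ∀ x y, f x ≤ y ↔ x ≤ g y)
    (μP : P → P → ℤ) (hμP1 : ∀ x, μP x x = 1)
    (hμP2 : ∀ x y : P, x < y →
      ∑ z ∈ Finset.univ.filter (fun z => x ≤ z ∧ z ≤ y), μP x z = 0)
    (μQ : Q → Q → ℤ) (hμQ1 : ∀ x, μQ x x = 1)
    (hμQ2 : ∀ x y : Q, x < y →
      ∑ z ∈ Finset.univ.filter (fun z => x ≤ z ∧ z ≤ y), μQ x z = 0)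
    (p : P) :
    (∀ y : Q, g y = p →
      (fun q : Q => ∑ x ∈ Finset.univ.filter (fun x : P => p ≤ x ∧ f x = q), (μP p x : k))
        = fun q : Q => if y ≤ q then (μQ y q : k) else 0) ∧
    ((¬ ∃ y : Q, g y = p) →
      (fun q : Q => ∑ x ∈ Finset.univ.filter (fun x : P => p ≤ x ∧ f x = q), (μP p x : k))
        = fun _ : Q => (0 : k)) := by
  classical
  -- f ∘ g = id
  have hfg : ∀ q, f (g q) = q := by
    intro q
    obtain ⟨x, rfl⟩ := hsurj q
    have h1 : x ≤ g (f x) := (hGal x (f x)).1 le_rfl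
    have h2 : f (g (f x)) ≤ f x := (hGal (g (f x)) (f x)).2 le_rfl
    exact le_antisymm h2 (hf h1)
  have hginj : Function.Injective g := fun a b h => by
    rw [← hfg a, h, hfg]
  -- S is the LHS function
  set S : Q → k :=
    fun q => ∑ x ∈ Finset.univ.filter (fun x : P => p ≤ x ∧ f x = q), (μP p x : k) with hSdef
  -- Lemma T : the "lower sum" of S
  have hT : ∀ q : Q,
      ∑ x ∈ Finset.univ.filter (fun x : P => p ≤ x ∧ f x ≤ q), (μP p x : k)
        = if g q = p then 1 else 0 := by
    intro q
    have hfilt : Finset.univ.filter (fun x : P => p ≤ x ∧ f x ≤ q)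
        = Finset.univ.filter (fun x : P => p ≤ x ∧ x ≤ g q) := by
      apply Finset.filter_congr
      intro x _
      simp [hGal x q]
    rw [hfilt]
    exact mobius_interval_sum' μP hμP1 hμP2 p (g q)
  -- Lemma A : fiberwise decomposition
  have hA : ∀ q : Q, ∑ q' ∈ Finset.univ.filter (· ≤ q), S q'
      = ∑ x ∈ Finset.univ.filter (fun x : P => p ≤ x ∧ f x ≤ q), (μP p x : k) := by
    intro q
    rw [← Finset.sum_fiberwise_of_maps_to (g := f) (t := Finset.univ.filter (· ≤ q))
      (fun x hx => by
        simp only [Finset.mem_filter, Finset.mem_univ, true_and] at hx ⊢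
        exact hx.2)]
    apply Finset.sum_congr rfl
    intro q' hq'
    simp only [Finset.mem_filter, Finset.mem_univ, true_and] at hq'
    apply Finset.sum_congr _ (fun _ _ => rfl)
    ext x
    simp only [Finset.mem_filter, Finset.mem_univ, true_and]
    constructor
    · intro h
      refine ⟨⟨h.1, ?_⟩, h.2⟩
      rw [h.2]
      exact hq'
    · tauto
  -- uniqueness from lower sums, by well-founded induction
  have hD : ∀ (S₁ S₂ : Q → k),
      (∀ q : Q, ∑ q' ∈ Finset.univ.filter (· ≤ q), S₁ q'
        = ∑ q' ∈ Finset.univ.filter (· ≤ q), S₂ q') → ∀ q, S₁ q = S₂ q := by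
    intro S₁ S₂ h q
    induction q using WellFoundedLT.induction with
    | ind q ih =>
      have hsplit : ∀ (T : Q → k), ∑ q' ∈ Finset.univ.filter (· ≤ q), T q'
          = T q + ∑ q' ∈ Finset.univ.filter (· < q), T q' := by
        intro T
        have hins : Finset.univ.filter (· ≤ q) = insert q (Finset.univ.filter (· < q)) := by
          ext x
          simp only [Finset.mem_filter, Finset.mem_univ, true_and, Finset.mem_insert]
          rw [le_iff_lt_or_eq]
          tauto
        rw [hins, Finset.sum_insert (by simp)]
      have h1 := h q
      rw [hsplit S₁, hsplit S₂] at h1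
      have h2 : ∑ q' ∈ Finset.univ.filter (· < q), S₁ q'
          = ∑ q' ∈ Finset.univ.filter (· < q), S₂ q' := by
        apply Finset.sum_congr rfl
        intro x hx
        simp only [Finset.mem_filter, Finset.mem_univ, true_and] at hx
        exact ih x hx
      rw [h2] at h1
      exact add_right_cancel h1
  constructor
  · intro y hy
    funext q
    apply hD
    intro q'
    rw [hA q', hT q']
    have hrhs : ∑ q'' ∈ Finset.univ.filter (· ≤ q'), (if y ≤ q'' then (μQ y q'' : k) else 0)
        = if q' = y then 1 else 0 := by
      rw [← Finset.sum_filter, Finset.filter_filter]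
      rw [show (Finset.univ.filter (fun a : Q => a ≤ q' ∧ y ≤ a))
          = Finset.univ.filter (fun a : Q => y ≤ a ∧ a ≤ q') from by
        apply Finset.filter_congr; intro a _; simp [and_comm]]
      exact mobius_interval_sum' μQ hμQ1 hμQ2 y q'
    rw [hrhs]
    congr 1
    simp only [eq_iff_iff]
    constructor
    · intro h; exact hginj (by rw [h, hy])
    · rintro rfl; exact hy
  · intro hno
    funext q
    apply hD
    intro q'
    rw [hA q', hT q']
    rw [if_neg (fun h => hno ⟨q', h⟩)]
    simp
end
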